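/- For permutations o and f of {1,...,m}, there exists a permutation u of {1,...,m+1} with prefixorder(u) = o and suffixorder(u) = f if and only if suffixorder(o) = prefixorder(f). -/
import Mathlib


/-- Rank of entry `j` among the entries of `q` (1-indexed rank). -/
def rankMap {α : Type*} [LinearOrder α] {m : ℕ} (q : Fin m → α) : Fin m → ℕ :=
  fun j => (Finset.univ.filter fun i => q i ≤ q j).card

/-- `x` is an order-preserving pattern (a permutation of `{1,...,m}` written as a sequence). -/
def IsOPP {m : ℕ} (x : Fin m → ℕ) : Prop :=
  Function.Injective x ∧ ∀ j, 1 ≤ x j ∧ x j ≤ m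

/-- The length-`ℓ` window of the (1-indexed) time series `k` ending at index `c`. -/
def window (k : ℕ → ℝ) (c ℓ : ℕ) : Fin ℓ → ℝ :=
  fun j => k (c - ℓ + 1 + (j : ℕ))

/-- `c` is an occurrence (end index) of pattern `p` in the time series `k` of length `n`. -/
def isOcc (k : ℕ → ℝ) (n : ℕ) {ℓ : ℕ} (p : Fin ℓ → ℕ) (c : ℕ) : Prop :=
  ℓ ≤ c ∧ c ≤ n ∧ rankMap (window k c ℓ) = p

/-- Relative order of the first `m` entries of `x`. -/
def prefixorder {α : Type*} [LinearOrder α] {m : ℕ} (x : Fin (m+1) → α) : Fin m → ℕ :=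
  rankMap (fun j : Fin m => x j.castSucc)

/-- Relative order of the last `m` entries of `x`. -/
def suffixorder {α : Type*} [LinearOrder α] {m : ℕ} (x : Fin (m+1) → α) : Fin m → ℕ :=
  rankMap (fun j : Fin m => x j.succ)

open Classical in
/-- The set of occurrences of `p` in `k`. -/
noncomputable def occSet (k : ℕ → ℝ) (n : ℕ) {ℓ : ℕ} (p : Fin ℓ → ℕ) : Finset ℕ :=
  (Finset.Icc 1 n).filter fun c => isOcc k n p c

/-- The support of `p` in `k`. -/
noncomputable def supp (k : ℕ → ℝ) (n : ℕ) {ℓ : ℕ} (p : Fin ℓ → ℕ) : ℕ :=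
  (occSet k n p).card


lemma rankMap_le_iff {α : Type*} [LinearOrder α] {n : ℕ} (q : Fin n → α) (i j : Fin n) :
    rankMap q i ≤ rankMap q j ↔ q i ≤ q j := by
  have mono : ∀ a b : Fin n, q a ≤ q b → rankMap q a ≤ rankMap q b := by
    intro a b hab
    apply Finset.card_le_card
    intro x hx
    simp only [Finset.mem_filter, Finset.mem_univ, true_and] at *
    exact le_trans hx hab
  have strict : ∀ a b : Fin n, q a < q b → rankMap q a < rankMap q b := by
    intro a b hab
    apply Finset.card_lt_card
    constructor
    · intro x hx
      simp only [Finset.mem_filter, Finset.mem_univ, true_and] at *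
      exact le_trans hx hab.le
    · intro hsub
      have := hsub (Finset.mem_filter.2 ⟨Finset.mem_univ b, le_refl (q b)⟩)
      simp only [Finset.mem_filter, Finset.mem_univ, true_and] at this
      exact absurd this (not_le.2 hab)
  constructor
  · intro h
    by_contra hc
    exact absurd h (not_le.2 (strict j i (not_le.1 hc)))
  · exact mono i j

lemma rankMap_congr {α β : Type*} [LinearOrder α] [LinearOrder β] {n : ℕ}
    (q : Fin n → α) (q' : Fin n → β)
    (h : ∀ i j, q i ≤ q j ↔ q' i ≤ q' j) : rankMap q = rankMap q' := by
  funext j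
  unfold rankMap
  congr 1
  apply Finset.filter_congr
  intro i _
  simp [h i j]

lemma rankMap_comp {α : Type*} [LinearOrder α] {n k : ℕ} (q : Fin n → α) (g : Fin k → Fin n) :
    rankMap (fun j => rankMap q (g j)) = rankMap (fun j => q (g j)) := by
  apply rankMap_congr
  intro i j
  exact rankMap_le_iff q (g i) (g j)

lemma rankMap_isOPP_self {n : ℕ} {p : Fin n → ℕ} (hp : IsOPP p) : rankMap p = p := by
  funext j
  have himg : Finset.image p Finset.univ = Finset.Icc 1 n := by
    apply Finset.eq_of_subset_of_card_le
    · intro x hx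
      simp only [Finset.mem_image] at hx
      obtain ⟨i, _, rfl⟩ := hx
      exact Finset.mem_Icc.2 (hp.2 i)
    · rw [Finset.card_image_of_injective _ hp.1]
      simp
  have hfilt : (Finset.univ.filter fun i => p i ≤ p j).image p = Finset.Icc 1 (p j) := by
    ext x
    simp only [Finset.mem_image, Finset.mem_filter, Finset.mem_univ, true_and, Finset.mem_Icc]
    constructor
    · rintro ⟨i, hi, rfl⟩
      exact ⟨(hp.2 i).1, hi⟩
    · rintro ⟨h1, h2⟩
      have hx : x ∈ Finset.image p Finset.univ := by
        rw [himg]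
        exact Finset.mem_Icc.2 ⟨h1, le_trans h2 (hp.2 j).2⟩
      obtain ⟨i, _, rfl⟩ := Finset.mem_image.1 hx
      exact ⟨i, h2, rfl⟩
  have hcard : (Finset.univ.filter fun i => p i ≤ p j).card = p j := by
    rw [← Finset.card_image_of_injective _ hp.1, hfilt, Nat.card_Icc]
    have := hp.2 j
    omega
  exact hcard

lemma rankMap_isOPP {n : ℕ} {q : Fin n → ℕ} (hq : Function.Injective q) :
    IsOPP (rankMap q) := by
  constructor
  · intro i j hij
    have h1 : q i ≤ q j := (rankMap_le_iff q i j).1 hij.le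
    have h2 : q j ≤ q i := (rankMap_le_iff q j i).1 hij.ge
    exact hq (le_antisymm h1 h2)
  · intro j
    constructor
    · apply Finset.card_pos.2
      exact ⟨j, Finset.mem_filter.2 ⟨Finset.mem_univ j, le_refl _⟩⟩
    · calc (Finset.univ.filter fun i => q i ≤ q j).card ≤ Finset.univ.card :=
            Finset.card_le_card (Finset.filter_subset _ _)
        _ = n := by simp

lemma fin_succ_castSucc {m : ℕ} (j : Fin m) :
    (j.castSucc).succ = (j.succ).castSucc := by
  ext
  simp

theorem stmt13 {m : ℕ} (o f : Fin (m+1) → ℕ) (ho : IsOPP o) (hf : IsOPP f) :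
    (∃ u : Fin (m+2) → ℕ, IsOPP u ∧ prefixorder u = o ∧ suffixorder u = f) ↔
      suffixorder o = prefixorder f := by
  constructor
  · rintro ⟨u, hu, rfl, rfl⟩
    show rankMap (fun j : Fin m => rankMap (fun i : Fin (m+1) => u i.castSucc) j.succ)
        = rankMap (fun j : Fin m => rankMap (fun i : Fin (m+1) => u i.succ) j.castSucc)
    rw [rankMap_comp (fun i : Fin (m+1) => u i.castSucc) (fun j : Fin m => j.succ),
      rankMap_comp (fun i : Fin (m+1) => u i.succ) (fun j : Fin m => j.castSucc)]
    apply rankMap_congr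
    intro i j
    rw [← fin_succ_castSucc i, ← fin_succ_castSucc j]
  · intro h
    have hkey : ∀ i i' : Fin m, o i.succ ≤ o i'.succ ↔ f i.castSucc ≤ f i'.castSucc := by
      intro i i'
      rw [← rankMap_le_iff (fun j : Fin m => o j.succ) i i']
      have h' : rankMap (fun j : Fin m => o j.succ) = rankMap (fun j : Fin m => f j.castSucc) := h
      rw [h', rankMap_le_iff]
    obtain ⟨t, ht_odd, ht⟩ :
        ∃ t : ℕ, t % 2 = 1 ∧ ∀ i : Fin m, (2 * f i.castSucc < t ↔ o i.succ < o 0) := by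
      by_cases hA : ∃ j : Fin m, o j.succ < o 0
      · obtain ⟨j₀, hj₀mem, hj₀max⟩ := Finset.exists_max_image
          (Finset.univ.filter fun j : Fin m => o j.succ < o 0) (fun j => o j.succ)
          (by obtain ⟨j, hj⟩ := hA
              exact ⟨j, Finset.mem_filter.2 ⟨Finset.mem_univ _, hj⟩⟩)
        refine ⟨2 * f j₀.castSucc + 1, by omega, fun i => ?_⟩
        constructor
        · intro hlt
          have h1 : f i.castSucc ≤ f j₀.castSucc := by omega
          have h2 : o i.succ ≤ o j₀.succ := (hkey i j₀).2 h1
          exact lt_of_le_of_lt h2 (Finset.mem_filter.1 hj₀mem).2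
        · intro hlt
          have h2 : o i.succ ≤ o j₀.succ :=
            hj₀max i (Finset.mem_filter.2 ⟨Finset.mem_univ _, hlt⟩)
          have h1 : f i.castSucc ≤ f j₀.castSucc := (hkey i j₀).1 h2
          omega
      · push_neg at hA
        refine ⟨1, rfl, fun i => ?_⟩
        have hb := (hf.2 i.castSucc).1
        constructor
        · omega
        · intro hlt
          exact absurd hlt (not_lt.2 (hA i))
    set v : Fin (m+2) → ℕ := Fin.cases t (fun i : Fin (m+1) => 2 * f i) with hv
    have hv0 : v 0 = t := rfl
    have hvs : ∀ i : Fin (m+1), v i.succ = 2 * f i := fun i => rfl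
    -- comparisons of t with 2 * f i.castSucc
    have hne : ∀ i : Fin m, t ≠ 2 * f i.castSucc := by
      intro i hcon
      omega
    have hle1 : ∀ i : Fin m, (t ≤ 2 * f i.castSucc ↔ o 0 ≤ o i.succ) := by
      intro i
      rw [← not_lt, ← not_lt, not_iff_not]
      exact ht i
    have hle2 : ∀ i : Fin m, (2 * f i.castSucc ≤ t ↔ o i.succ ≤ o 0) := by
      intro i
      have hone : o i.succ ≠ o 0 := fun hc => by
        have := ho.1 hc
        exact absurd this (Fin.succ_ne_zero i)
      constructor
      · intro hle
        have : 2 * f i.castSucc < t := lt_of_le_of_ne hle (fun hc => hne i hc.symm)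
        exact ((ht i).1 this).le
      · intro hle
        have : o i.succ < o 0 := lt_of_le_of_ne hle hone
        exact ((ht i).2 this).le
    -- injectivity of v
    have hvinj : Function.Injective v := by
      intro a b hab
      induction a using Fin.cases with
      | zero =>
        induction b using Fin.cases with
        | zero => rfl
        | succ b =>
          rw [hv0, hvs] at hab
          omega
      | succ a =>
        induction b using Fin.cases with
        | zero =>
          rw [hv0, hvs] at hab
          omega
        | succ b =>
          rw [hvs, hvs] at hab
          have : f a = f b := by omega
          rw [hf.1 this]
    refine ⟨rankMap v, rankMap_isOPP hvinj, ?_, ?_⟩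
    · show rankMap (fun j : Fin (m+1) => rankMap v j.castSucc) = o
      rw [rankMap_comp v (fun j : Fin (m+1) => j.castSucc)]
      rw [← rankMap_isOPP_self ho]
      apply rankMap_congr
      intro a b
      induction a using Fin.cases with
      | zero =>
        induction b using Fin.cases with
        | zero => simp
        | succ b =>
          show v (0 : Fin (m+1)).castSucc ≤ v b.succ.castSucc ↔ _
          rw [show ((0 : Fin (m+1)).castSucc) = (0 : Fin (m+2)) from rfl,
            ← fin_succ_castSucc b, hv0, hvs]
          exact hle1 b
      | succ a =>
        induction b using Fin.cases with
        | zero =>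
          show v a.succ.castSucc ≤ v (0 : Fin (m+1)).castSucc ↔ _
          rw [show ((0 : Fin (m+1)).castSucc) = (0 : Fin (m+2)) from rfl,
            ← fin_succ_castSucc a, hv0, hvs]
          exact hle2 a
        | succ b =>
          show v a.succ.castSucc ≤ v b.succ.castSucc ↔ _
          rw [← fin_succ_castSucc a, ← fin_succ_castSucc b, hvs, hvs]
          constructor
          · intro hab
            exact (hkey a b).2 (by omega)
          · intro hab
            have := (hkey a b).1 hab
            omega
    · show rankMap (fun j : Fin (m+1) => rankMap v j.succ) = f
      rw [rankMap_comp v (fun j : Fin (m+1) => j.succ)]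
      rw [← rankMap_isOPP_self hf]
      apply rankMap_congr
      intro a b
      rw [hvs, hvs]
      omega
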